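/- arXiv:1712.04876 — 4 statements merged into one kernel-verified Lean document; each statement's English description precedes it below -/
import Mathlib

section
/- Let τ : Ω → ℕ be a random variable with E[τ] = λ(D) < ∞, and let (P_i)_{i∈ℕ} and (P̃_i)_{i∈ℕ} be sequences of real random variables, independent of τ, such that E[|P_i − P̃_i|^s] ≤ ε for all i and some s ∈ [1,∞), ε > 0. Then E[ max_{1 ≤ i ≤ τ} |P_i − P̃_i|^s ] ≤ λ(D)·ε. -/
/-!
Bound the maximum by the sum `∑_{i=1}^{τ} |P_i - P̃_i|^s` and write that sum as
`∑_i 1{i ≤ τ} |P_i - P̃_i|^s`. By independence each term has expectation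
`ℙ(i ≤ τ) E|P_i - P̃_i|^s ≤ ℙ(i ≤ τ) ε`, and `∑_{i ≥ 1} ℙ(i ≤ τ) = E[τ]`.
-/

open MeasureTheory ProbabilityTheory
open scoped ENNReal

theorem ofReal_integral_le_lintegral_ofReal_of_nonneg {α : Type*} [MeasurableSpace α]
    {μ : Measure α} {f : α → ℝ} (hf : ∀ x, 0 ≤ f x) :
    ENNReal.ofReal (∫ x, f x ∂μ) ≤ ∫⁻ x, ENNReal.ofReal (f x) ∂μ :=
  calc ENNReal.ofReal (∫ x, f x ∂μ)
      = ‖∫ x, f x ∂μ‖ₑ := (Real.enorm_of_nonneg (integral_nonneg hf)).symm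
    _ ≤ ∫⁻ x, ‖f x‖ₑ ∂μ := enorm_integral_le_lintegral_enorm f
    _ = ∫⁻ x, ENNReal.ofReal (f x) ∂μ := lintegral_congr fun x => Real.enorm_of_nonneg (hf x)

theorem Finset.ofReal_sup'_le_sum {ι : Type*} (s : Finset ι) (hs : s.Nonempty) (f : ι → ℝ) :
    ENNReal.ofReal (s.sup' hs f) ≤ ∑ i ∈ s, ENNReal.ofReal (f i) := by
  obtain ⟨j, hj, hsup⟩ := s.exists_mem_eq_sup' hs f
  rw [hsup]
  exact Finset.single_le_sum (f := fun i => ENNReal.ofReal (f i)) (fun _ _ => bot_le) hj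

theorem Finset.sum_Icc_one_eq_sum_range {M : Type*} [AddCommMonoid M] (f : ℕ → M) (n : ℕ) :
    ∑ i ∈ Finset.Icc 1 n, f i = ∑ i ∈ Finset.range n, f (i + 1) := by
  rw [Finset.range_eq_Ico, Finset.sum_Ico_add']
  rfl

section Wald

variable {Ω : Type*} {m mΩ : MeasurableSpace Ω} {μ : Measure Ω}
  {τ : Ω → ℕ} {X : ℕ → Ω → ℝ≥0∞}

theorem lintegral_sum_range_eq_tsum_of_indep (hm : m ≤ mΩ) (hτ : Measurable τ)
    (hX : ∀ i, Measurable[m] (X i)) (hind : Indep (MeasurableSpace.comap τ inferInstance) m μ) :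
    ∫⁻ ω, ∑ i ∈ Finset.range (τ ω), X i ω ∂μ = ∑' i, μ {ω | i < τ ω} * ∫⁻ ω, X i ω ∂μ := by
  have hset : ∀ i, MeasurableSet[MeasurableSpace.comap τ inferInstance] {ω | i < τ ω} :=
    fun i => ⟨Set.Ioi i, measurableSet_Ioi, rfl⟩
  have hsum : ∀ ω, ∑ i ∈ Finset.range (τ ω), X i ω = ∑' i, {ω | i < τ ω}.indicator (X i) ω := by
    intro ω
    rw [tsum_eq_sum (s := Finset.range (τ ω)) fun i hi => ?_]
    · exact Finset.sum_congr rfl fun i hi =>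
        (Set.indicator_of_mem (s := {ω | i < τ ω}) (Finset.mem_range.mp hi) _).symm
    · exact Set.indicator_of_notMem (by simpa using hi) _
  have hterm : ∀ i, ∫⁻ ω, {ω | i < τ ω}.indicator (X i) ω ∂μ
      = μ {ω | i < τ ω} * ∫⁻ ω, X i ω ∂μ := by
    intro i
    rw [← lintegral_indicator_one (hτ.comap_le _ (hset i)),
      ← lintegral_mul_eq_lintegral_mul_lintegral_of_independent_measurableSpace
        hτ.comap_le hm hind (measurable_const.indicator (f := 1) (hset i)) (hX i)]
    congr with ω
    simp [Set.indicator_apply]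
  simp_rw [hsum]
  rw [lintegral_tsum fun i => ((hX i).mono hm le_rfl).aemeasurable.indicator
    (hτ.comap_le _ (hset i))]
  exact tsum_congr hterm

theorem lintegral_sum_range_le_of_indep [IsProbabilityMeasure μ] (hm : m ≤ mΩ)
    (hτ : Measurable τ) (hX : ∀ i, Measurable[m] (X i))
    (hind : Indep (MeasurableSpace.comap τ inferInstance) m μ) {c : ℝ≥0∞}
    (hc : ∀ i, ∫⁻ ω, X i ω ∂μ ≤ c) :
    ∫⁻ ω, ∑ i ∈ Finset.range (τ ω), X i ω ∂μ ≤ (∫⁻ ω, (τ ω : ℝ≥0∞) ∂μ) * c := by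
  -- The tail-sum formula for `E[τ]` is the case `X ≡ 1`, independent of the trivial σ-algebra.
  have htail : ∫⁻ ω, (τ ω : ℝ≥0∞) ∂μ = ∑' i, μ {ω | i < τ ω} := by
    simpa using lintegral_sum_range_eq_tsum_of_indep (m := ⊥) (X := fun _ _ => 1) bot_le hτ
      (fun _ => measurable_const) (indep_bot_right (μ := μ) _)
  rw [lintegral_sum_range_eq_tsum_of_indep hm hτ hX hind, htail, ← ENNReal.tsum_mul_right]
  exact ENNReal.tsum_le_tsum fun i => mul_le_mul_right (hc i) _

end Wald

theorem stmt3_general {Ω : Type*} [MeasurableSpace Ω] (μ : Measure Ω) [IsProbabilityMeasure μ]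
    (τ : Ω → ℕ) (hτmeas : Measurable τ) (hτ1 : ∀ ω, 1 ≤ τ ω)
    (lamD : ℝ) (hτint : Integrable (fun ω => (τ ω : ℝ)) μ)
    (hτmean : ∫ ω, (τ ω : ℝ) ∂μ = lamD)
    (P Ptil : ℕ → Ω → ℝ) (hPmeas : ∀ i, Measurable (P i)) (hPtmeas : ∀ i, Measurable (Ptil i))
    (s : ℝ) (ε : ℝ)
    (hindep : Indep (MeasurableSpace.comap τ inferInstance)
      (⨆ i, MeasurableSpace.comap (fun ω => |P i ω - Ptil i ω|) inferInstance) μ)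
    (hint : ∀ i, Integrable (fun ω => |P i ω - Ptil i ω| ^ s) μ)
    (hmom : ∀ i, ∫ ω, |P i ω - Ptil i ω| ^ s ∂μ ≤ ε) :
    ∫ ω, (Finset.Icc 1 (τ ω)).sup' (Finset.nonempty_Icc.mpr (hτ1 ω))
        (fun i => |P i ω - Ptil i ω| ^ s) ∂μ ≤ lamD * ε := by
  set Y : ℕ → Ω → ℝ≥0∞ := fun i ω => ENNReal.ofReal (|P i ω - Ptil i ω| ^ s)
  have hnonneg : ∀ i ω, 0 ≤ |P i ω - Ptil i ω| ^ s := fun i ω => by positivity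
  have hε : 0 ≤ ε := (integral_nonneg (hnonneg 0)).trans (hmom 0)
  have hm : (⨆ i, MeasurableSpace.comap (fun ω => |P i ω - Ptil i ω|) inferInstance) ≤ ‹_› :=
    iSup_le fun i => ((hPmeas i).sub (hPtmeas i)).abs.comap_le
  have hY : ∀ i, Measurable[⨆ i, MeasurableSpace.comap (fun ω => |P i ω - Ptil i ω|)
      inferInstance] (Y i) := fun i =>
    ((Measurable.of_comap_le (le_iSup_of_le i le_rfl)).pow_const s).ennreal_ofReal
  have hYint : ∀ i, ∫⁻ ω, Y i ω ∂μ ≤ ENNReal.ofReal ε := fun i => by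
    rw [← ofReal_integral_eq_lintegral_ofReal (hint i) (.of_forall (hnonneg i))]
    exact ENNReal.ofReal_le_ofReal (hmom i)
  have hlamD : 0 ≤ lamD := hτmean ▸ integral_nonneg fun _ => by positivity
  have hτlint : ∫⁻ ω, (τ ω : ℝ≥0∞) ∂μ = ENNReal.ofReal lamD := by
    rw [← hτmean, ofReal_integral_eq_lintegral_ofReal hτint (.of_forall fun _ => by positivity)]
    simp
  rw [← ENNReal.ofReal_le_ofReal_iff (mul_nonneg hlamD hε)]
  calc ENNReal.ofReal (∫ ω, (Finset.Icc 1 (τ ω)).sup' _ (fun i => |P i ω - Ptil i ω| ^ s) ∂μ)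
      ≤ ∫⁻ ω, ∑ i ∈ Finset.range (τ ω), Y (i + 1) ω ∂μ := by
        refine (ofReal_integral_le_lintegral_ofReal_of_nonneg fun ω => ?_).trans
          (lintegral_mono fun ω => ?_)
        · exact (hnonneg 1 ω).trans
            (Finset.le_sup' (fun i => |P i ω - Ptil i ω| ^ s) (Finset.mem_Icc.mpr ⟨le_rfl, hτ1 ω⟩))
        · exact (Finset.ofReal_sup'_le_sum _ _ _).trans_eq (Finset.sum_Icc_one_eq_sum_range _ _)
    _ ≤ (∫⁻ ω, (τ ω : ℝ≥0∞) ∂μ) * ENNReal.ofReal ε :=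
        lintegral_sum_range_le_of_indep hm hτmeas (fun i => hY (i + 1)) hindep
          fun i => hYint (i + 1)
    _ = ENNReal.ofReal (lamD * ε) := by rw [hτlint, ENNReal.ofReal_mul hlamD]

/-- Sampling error of the jump part: `E[max_{1 ≤ i ≤ τ} |P_i − P̃_i|^s] ≤ λ(D)·ε`. -/
theorem stmt3 {Ω : Type*} [MeasurableSpace Ω] (μ : Measure Ω) [IsProbabilityMeasure μ]
    (τ : Ω → ℕ) (hτmeas : Measurable τ) (hτ1 : ∀ ω, 1 ≤ τ ω)
    (lamD : ℝ) (hτint : Integrable (fun ω => (τ ω : ℝ)) μ)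
    (hτmean : ∫ ω, (τ ω : ℝ) ∂μ = lamD)
    (P Ptil : ℕ → Ω → ℝ) (hPmeas : ∀ i, Measurable (P i)) (hPtmeas : ∀ i, Measurable (Ptil i))
    (s : ℝ) (hs : 1 ≤ s) (ε : ℝ) (hε : 0 < ε)
    (hindep : Indep (MeasurableSpace.comap τ inferInstance)
      (⨆ i, MeasurableSpace.comap (fun ω => |P i ω - Ptil i ω|) inferInstance) μ)
    (hint : ∀ i, Integrable (fun ω => |P i ω - Ptil i ω| ^ s) μ)
    (hmom : ∀ i, ∫ ω, |P i ω - Ptil i ω| ^ s ∂μ ≤ ε)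
    (hmaxint : Integrable (fun ω => (Finset.Icc 1 (τ ω)).sup'
      (Finset.nonempty_Icc.mpr (hτ1 ω)) (fun i => |P i ω - Ptil i ω| ^ s)) μ) :
    ∫ ω, (Finset.Icc 1 (τ ω)).sup' (Finset.nonempty_Icc.mpr (hτ1 ω))
        (fun i => |P i ω - Ptil i ω| ^ s) ∂μ ≤ lamD * ε :=
  stmt3_general μ τ hτmeas hτ1 lamD hτint hτmean P Ptil hPmeas hPtmeas s ε hindep hint hmom
end

section
/- Let V be a Hilbert space, a, a' : D → ℝ measurable with 0 < a'₋ ≤ a'(x), and let u, u' ∈ H¹(D) satisfy ∫_D a ∇u·∇v dx = F(v) and ∫_D a' ∇u'·∇v dx = F(v) for all v in a closed subspace V of H¹(D). Then ∫_D a' ‖∇u − ∇u'‖² dx = ∫_D (a' − a) ∇u · (∇u − ∇u') dx, and consequently ‖∇(u − u')‖_{L²(D)} ≤ (1/a'₋) ‖a' − a‖_{L^∞(D)} ‖∇u‖_{L²(D)}. -/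
/-!
Testing both weak formulations against `U - U'` and subtracting them gives the identity
`∫ a' ‖U - U'‖² = ∫ (a' - a) ⟪U, U - U'⟫`. Its left side is at least `a'₋ ‖U - U'‖²_{L²}`, and
its right side is at most `‖a' - a‖_∞ ‖U‖_{L²} ‖U - U'‖_{L²}` by the Cauchy–Schwarz inequality,
first pointwise in `E` and then in `L²`; dividing by `a'₋ ‖U - U'‖_{L²}` gives the estimate.
-/

open MeasureTheory Real
open scoped RealInnerProductSpace

lemma le_div_of_mul_sq_le_mul {c M x : ℝ} (hc : 0 < c) (hM : 0 ≤ M) (hx : 0 ≤ x)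
    (h : c * x ^ 2 ≤ M * x) : x ≤ M / c := by
  rcases hx.eq_or_lt with rfl | hx
  · positivity
  · rw [le_div_iff₀ hc, mul_comm]
    exact le_of_mul_le_mul_right (by nlinarith) hx

namespace MeasureTheory

variable {D : Type*} [MeasurableSpace D] {μ : Measure D}

lemma memLp_two_of_nonneg_of_integrable_sq {f : D → ℝ} (hf : 0 ≤ f)
    (hf2 : Integrable (fun x => f x ^ 2) μ) : MemLp f 2 μ := by
  have hmeas : AEStronglyMeasurable f μ := by
    have : f = fun x => √(f x ^ 2) := funext fun x => (sqrt_sq (hf x)).symm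
    rw [this]
    exact continuous_sqrt.comp_aestronglyMeasurable hf2.1
  exact (memLp_two_iff_integrable_sq hmeas).2 hf2

lemma integral_mul_le_sqrt_integral_sq_mul_sqrt_integral_sq {f g : D → ℝ} (hf : 0 ≤ f)
    (hg : 0 ≤ g) (hf2 : Integrable (fun x => f x ^ 2) μ) (hg2 : Integrable (fun x => g x ^ 2) μ) :
    ∫ x, f x * g x ∂μ ≤ √(∫ x, f x ^ 2 ∂μ) * √(∫ x, g x ^ 2 ∂μ) := by
  have h := integral_mul_le_Lp_mul_Lq_of_nonneg HolderConjugate.two_two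
    (.of_forall hf) (.of_forall hg)
    (by simpa using memLp_two_of_nonneg_of_integrable_sq hf hf2)
    (by simpa using memLp_two_of_nonneg_of_integrable_sq hg hg2)
  simpa [sqrt_eq_rpow] using h

variable {E : Type*} [NormedAddCommGroup E] [InnerProductSpace ℝ E]

lemma abs_integral_mul_inner_le {b : D → ℝ} {K : ℝ} {U G : D → E} (hK : 0 ≤ K)
    (hb : ∀ x, |b x| ≤ K) (hU : Integrable (fun x => ‖U x‖ ^ 2) μ)
    (hG : Integrable (fun x => ‖G x‖ ^ 2) μ) :
    |∫ x, b x * ⟪U x, G x⟫ ∂μ| ≤ K * (√(∫ x, ‖U x‖ ^ 2 ∂μ) * √(∫ x, ‖G x‖ ^ 2 ∂μ)) := by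
  have hUL := memLp_two_of_nonneg_of_integrable_sq (fun x => norm_nonneg (U x)) hU
  have hGL := memLp_two_of_nonneg_of_integrable_sq (fun x => norm_nonneg (G x)) hG
  have hpointwise : ∀ x, ‖b x * ⟪U x, G x⟫‖ ≤ K * (‖U x‖ * ‖G x‖) := fun x => by
    rw [norm_mul, norm_eq_abs]
    exact mul_le_mul (hb x) (norm_inner_le_norm _ _) (norm_nonneg _) hK
  calc |∫ x, b x * ⟪U x, G x⟫ ∂μ|
      ≤ ∫ x, K * (‖U x‖ * ‖G x‖) ∂μ :=
        norm_integral_le_of_norm_le ((hUL.integrable_mul hGL).const_mul K) (.of_forall hpointwise)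
    _ = K * ∫ x, ‖U x‖ * ‖G x‖ ∂μ := integral_const_mul _ _
    _ ≤ K * (√(∫ x, ‖U x‖ ^ 2 ∂μ) * √(∫ x, ‖G x‖ ^ 2 ∂μ)) :=
        mul_le_mul_of_nonneg_left (integral_mul_le_sqrt_integral_sq_mul_sqrt_integral_sq
          (fun x => norm_nonneg (U x)) (fun x => norm_nonneg (G x)) hU hG) hK

lemma integral_mul_inner_sub_eq {a a' : D → ℝ} {U U' G : D → E}
    (h : ∫ x, a x * ⟪U x, G x⟫ ∂μ = ∫ x, a' x * ⟪U' x, G x⟫ ∂μ)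
    (ha'U : Integrable (fun x => a' x * ⟪U x, G x⟫) μ)
    (haU : Integrable (fun x => a x * ⟪U x, G x⟫) μ)
    (hsub : Integrable (fun x => a' x * ⟪U x - U' x, G x⟫) μ) :
    ∫ x, a' x * ⟪U x - U' x, G x⟫ ∂μ = ∫ x, (a' x - a x) * ⟪U x, G x⟫ ∂μ := by
  have hsplit : ∀ x, a' x * ⟪U' x, G x⟫ = a' x * ⟪U x, G x⟫ - a' x * ⟪U x - U' x, G x⟫ :=
    fun x => by rw [inner_sub_left]; ring
  have ha'U' : Integrable (fun x => a' x * ⟪U' x, G x⟫) μ :=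
    (ha'U.sub hsub).congr (.of_forall fun x => (hsplit x).symm)
  calc ∫ x, a' x * ⟪U x - U' x, G x⟫ ∂μ
      = ∫ x, a' x * ⟪U x, G x⟫ ∂μ - ∫ x, a' x * ⟪U' x, G x⟫ ∂μ := by
        rw [← integral_sub ha'U ha'U']
        simp only [inner_sub_left, mul_sub]
    _ = ∫ x, (a' x - a x) * ⟪U x, G x⟫ ∂μ := by
        rw [← h, ← integral_sub ha'U haU]
        simp only [sub_mul]

end MeasureTheory

/-- Pathwise perturbation identity for weak solutions of two elliptic problems with the
same right-hand side: `U, U'` are the gradient fields of `u, u'`, `S` the set of gradient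
fields of admissible test functions. -/
theorem stmt10 {D : Type*} [MeasurableSpace D] (μ : Measure D)
    {E : Type*} [NormedAddCommGroup E] [InnerProductSpace ℝ E]
    (a a' : D → ℝ) (aminus' Ka : ℝ) (ha' : ∀ x, aminus' ≤ a' x) (hamin : 0 < aminus')
    (haa : ∀ x, |a' x - a x| ≤ Ka)
    (U U' : D → E) (F : (D → E) → ℝ) (S : Set (D → E))
    (hmem : (fun x => U x - U' x) ∈ S)
    (h1 : ∀ G ∈ S, (∫ x, a x * inner (𝕜 := ℝ) (U x) (G x) ∂μ) = F G)
    (h2 : ∀ G ∈ S, (∫ x, a' x * inner (𝕜 := ℝ) (U' x) (G x) ∂μ) = F G)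
    (hi1 : Integrable (fun x => ‖U x‖ ^ 2) μ)
    (hi2 : Integrable (fun x => ‖U x - U' x‖ ^ 2) μ)
    (hi3 : Integrable (fun x => a' x * ‖U x - U' x‖ ^ 2) μ)
    (hi4 : Integrable (fun x => a' x * inner (𝕜 := ℝ) (U x) (U x - U' x)) μ)
    (hi5 : Integrable (fun x => a x * inner (𝕜 := ℝ) (U x) (U x - U' x)) μ) :
    (∫ x, a' x * ‖U x - U' x‖ ^ 2 ∂μ)
        = (∫ x, (a' x - a x) * inner (𝕜 := ℝ) (U x) (U x - U' x) ∂μ)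
    ∧ Real.sqrt (∫ x, ‖U x - U' x‖ ^ 2 ∂μ)
        ≤ (1 / aminus') * Ka * Real.sqrt (∫ x, ‖U x‖ ^ 2 ∂μ) := by
  rcases isEmpty_or_nonempty D with hD | ⟨⟨x₀⟩⟩
  · simp [integral_of_isEmpty]
  have hKa : 0 ≤ Ka := (abs_nonneg _).trans (haa x₀)
  have henergy : ∫ x, a' x * ‖U x - U' x‖ ^ 2 ∂μ
      = ∫ x, (a' x - a x) * ⟪U x, U x - U' x⟫ ∂μ := by
    simp_rw [← real_inner_self_eq_norm_sq] at hi3 ⊢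
    exact integral_mul_inner_sub_eq ((h1 _ hmem).trans (h2 _ hmem).symm) hi4 hi5 hi3
  refine ⟨henergy, ?_⟩
  have hcoercive : aminus' * √(∫ x, ‖U x - U' x‖ ^ 2 ∂μ) ^ 2
      ≤ Ka * √(∫ x, ‖U x‖ ^ 2 ∂μ) * √(∫ x, ‖U x - U' x‖ ^ 2 ∂μ) := by
    rw [sq_sqrt (integral_nonneg fun x => sq_nonneg _), ← integral_const_mul, mul_assoc]
    calc ∫ x, aminus' * ‖U x - U' x‖ ^ 2 ∂μ
        ≤ ∫ x, a' x * ‖U x - U' x‖ ^ 2 ∂μ :=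
          integral_mono (hi2.const_mul _) hi3 fun x => by gcongr; exact ha' x
      _ ≤ |∫ x, (a' x - a x) * ⟪U x, U x - U' x⟫ ∂μ| := henergy ▸ le_abs_self _
      _ ≤ _ := abs_integral_mul_inner_le hKa haa hi1 hi2
  calc √(∫ x, ‖U x - U' x‖ ^ 2 ∂μ)
      ≤ Ka * √(∫ x, ‖U x‖ ^ 2 ∂μ) / aminus' :=
        le_div_of_mul_sq_le_mul hamin (by positivity) (sqrt_nonneg _) hcoercive
    _ = 1 / aminus' * Ka * √(∫ x, ‖U x‖ ^ 2 ∂μ) := by ring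
end

section
/- Let V be a separable Hilbert space and u, u₀, u₁, …, u_L ∈ L²(Ω;V) with u_{-1} := 0. Suppose ‖u − u_ℓ‖_{L²(Ω;V)} ≤ e_ℓ for each ℓ = 0, …, L and ‖u‖_{L²(Ω;V)} ≤ e_{-1}. For M₀, …, M_L ∈ ℕ let E^L := Σ_{ℓ=0}^L E_{M_ℓ}(u_ℓ − u_{ℓ-1}) be the multilevel Monte Carlo estimator built from independent Monte Carlo estimators of the corrections. Then ‖E[u] − E^L‖_{L²(Ω;V)} ≤ e_L + Σ_{ℓ=0}^L (e_ℓ + e_{ℓ-1})/√(M_ℓ). -/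
/-!
With the corrections `w_ℓ = v_ℓ - v_{ℓ-1}` the means telescope, `∑_{ℓ ≤ L} E[w_ℓ] = E[v_L]`, so
the error of the estimator is the bias `E[u - v_L]`, of norm at most `‖u - v_L‖_{L²} ≤ e_L`,
plus the sum of the level-wise Monte Carlo errors `E[w_ℓ] - E_{M_ℓ}(w_ℓ)`. Centred independent
samples are orthogonal in `L²(Ω;V)` and centring does not increase the `L²` norm, so the Monte
Carlo error of `M` samples of `w` has norm at most `‖w‖_{L²}/√M`; finally
`‖w_ℓ‖_{L²} ≤ ‖u - v_{ℓ-1}‖_{L²} + ‖u - v_ℓ‖_{L²}`.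
-/

open MeasureTheory ProbabilityTheory Finset
open scoped RealInnerProductSpace

section L2Norm

variable {Ω V : Type*} [MeasurableSpace Ω] {μ : Measure Ω} [NormedAddCommGroup V]

/-- The norm of `L²(Ω; V)` evaluated on a representative; it is `0` when `‖f‖²` is not
integrable. -/
noncomputable def l2Norm (μ : Measure Ω) (f : Ω → V) : ℝ := √(∫ ω, ‖f ω‖ ^ 2 ∂μ)

lemma l2Norm_eq_norm_toLp {f : Ω → V} (hf : MemLp f 2 μ) : l2Norm μ f = ‖hf.toLp f‖ := by
  rw [Lp.norm_toLp, hf.eLpNorm_eq_integral_rpow_norm two_ne_zero ENNReal.ofNat_ne_top,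
    ENNReal.toReal_ofReal (by positivity), l2Norm, Real.sqrt_eq_rpow]
  norm_num

lemma l2Norm_add_le {f g : Ω → V} (hf : MemLp f 2 μ) (hg : MemLp g 2 μ) :
    l2Norm μ (f + g) ≤ l2Norm μ f + l2Norm μ g := by
  rw [l2Norm_eq_norm_toLp (hf.add hg), l2Norm_eq_norm_toLp hf, l2Norm_eq_norm_toLp hg,
    MemLp.toLp_add]
  exact norm_add_le _ _

lemma l2Norm_sub_le {f g : Ω → V} (hf : MemLp f 2 μ) (hg : MemLp g 2 μ) :
    l2Norm μ (f - g) ≤ l2Norm μ f + l2Norm μ g := by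
  rw [l2Norm_eq_norm_toLp (hf.sub hg), l2Norm_eq_norm_toLp hf, l2Norm_eq_norm_toLp hg,
    MemLp.toLp_sub]
  exact norm_sub_le _ _

lemma l2Norm_sum_le {ι : Type*} (s : Finset ι) {f : ι → Ω → V}
    (hf : ∀ i ∈ s, MemLp (f i) 2 μ) :
    l2Norm μ (∑ i ∈ s, f i) ≤ ∑ i ∈ s, l2Norm μ (f i) :=
  le_sum_of_subadditive_on_pred (l2Norm μ) (fun g : Ω → V => MemLp g 2 μ) (by simp [l2Norm])
    (fun _ _ => l2Norm_add_le) (fun _ _ => MemLp.add) f hf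

lemma l2Norm_const [IsProbabilityMeasure μ] (c : V) : l2Norm μ (fun _ => c) = ‖c‖ := by
  simp [l2Norm]

lemma l2Norm_smul [NormedSpace ℝ V] (c : ℝ) (f : Ω → V) :
    l2Norm μ (c • f) = |c| * l2Norm μ f := by
  simp only [l2Norm, Pi.smul_apply, norm_smul, mul_pow, integral_const_mul, Real.norm_eq_abs]
  rw [Real.sqrt_mul (sq_nonneg _), Real.sqrt_sq_eq_abs, abs_abs]

lemma l2Norm_const_sub_sum_le [IsProbabilityMeasure μ] {ι : Type*} (s : Finset ι) (c : V)
    (m : ι → V) {A : ι → Ω → V} (hA : ∀ i ∈ s, MemLp (A i) 2 μ) :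
    l2Norm μ (fun ω => c - ∑ i ∈ s, A i ω)
      ≤ ‖c - ∑ i ∈ s, m i‖ + ∑ i ∈ s, l2Norm μ (fun ω => m i - A i ω) := by
  have hmA : ∀ i ∈ s, MemLp (fun ω => m i - A i ω) 2 μ := fun i hi =>
    (memLp_const _).sub (hA i hi)
  have hsplit : (fun ω => c - ∑ i ∈ s, A i ω)
      = (fun _ => c - ∑ i ∈ s, m i) + ∑ i ∈ s, fun ω => m i - A i ω := by
    funext ω
    simp only [Pi.add_apply, Finset.sum_apply, sum_sub_distrib]
    abel
  rw [hsplit]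
  calc _ ≤ l2Norm μ (fun _ => c - ∑ i ∈ s, m i) + l2Norm μ (∑ i ∈ s, fun ω => m i - A i ω) :=
        l2Norm_add_le (memLp_const _) (memLp_finsetSum' s hmA)
    _ ≤ _ := by
        rw [l2Norm_const]
        gcongr
        exact l2Norm_sum_le s hmA

lemma MeasureTheory.MemLp.integrable_inner [InnerProductSpace ℝ V] {f g : Ω → V}
    (hf : MemLp f 2 μ) (hg : MemLp g 2 μ) : Integrable (fun ω => ⟪f ω, g ω⟫) μ :=
  (L2.integrable_inner (hf.toLp f) (hg.toLp g)).congr <| by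
    filter_upwards [hf.coeFn_toLp, hg.coeFn_toLp] with ω hfω hgω
    rw [hfω, hgω]

end L2Norm

lemma sum_range_sub_prev {G : Type*} [AddCommGroup G] (g : ℕ → G) (L : ℕ) :
    ∑ ℓ ∈ range (L + 1), (g ℓ - if ℓ = 0 then 0 else g (ℓ - 1)) = g L := by
  rw [sum_range_succ', if_pos rfl, sub_zero]
  simp only [Nat.add_one_ne_zero, ↓reduceIte, Nat.add_sub_cancel, sum_range_sub, sub_add_cancel]

section MonteCarlo

variable {Ω V : Type*} [MeasurableSpace Ω] {μ : Measure Ω}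
  [NormedAddCommGroup V] [InnerProductSpace ℝ V] [CompleteSpace V]

lemma integral_norm_sub_integral_sq [IsProbabilityMeasure μ] {W : Ω → V} (hW : MemLp W 2 μ) :
    ∫ ω, ‖W ω - ∫ ω', W ω' ∂μ‖ ^ 2 ∂μ = ∫ ω, ‖W ω‖ ^ 2 ∂μ - ‖∫ ω, W ω ∂μ‖ ^ 2 := by
  set m := ∫ ω, W ω ∂μ
  have hWint : Integrable W μ := hW.integrable one_le_two
  have hsq : Integrable (fun ω => ‖W ω‖ ^ 2) μ := hW.integrable_norm_pow two_ne_zero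
  have hinner : Integrable (fun ω => 2 * ⟪m, W ω⟫) μ := (hWint.const_inner m).const_mul 2
  have hdiff : Integrable (fun ω => ‖W ω‖ ^ 2 - 2 * ⟪m, W ω⟫) μ := hsq.sub hinner
  calc ∫ ω, ‖W ω - m‖ ^ 2 ∂μ = ∫ ω, (‖W ω‖ ^ 2 - 2 * ⟪m, W ω⟫ + ‖m‖ ^ 2) ∂μ := by
        simp only [norm_sub_sq_real, real_inner_comm]
    _ = ∫ ω, ‖W ω‖ ^ 2 ∂μ - 2 * ⟪m, m⟫ + ‖m‖ ^ 2 := by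
        rw [integral_add hdiff (integrable_const _), integral_sub hsq hinner, integral_const_mul,
          integral_inner hWint, integral_const, probReal_univ, one_smul]
    _ = ∫ ω, ‖W ω‖ ^ 2 ∂μ - ‖m‖ ^ 2 := by
        rw [real_inner_self_eq_norm_sq]
        ring

lemma norm_integral_le_l2Norm [IsProbabilityMeasure μ] {W : Ω → V} (hW : MemLp W 2 μ) :
    ‖∫ ω, W ω ∂μ‖ ≤ l2Norm μ W := by
  have hvar := integral_norm_sub_integral_sq hW
  have hvar_nonneg : 0 ≤ ∫ ω, ‖W ω - ∫ ω', W ω' ∂μ‖ ^ 2 ∂μ := by positivity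
  exact Real.le_sqrt_of_sq_le (by linarith)

variable [MeasurableSpace V] [BorelSpace V]

lemma integral_norm_sum_sq_of_pairwise_indepFun [IsFiniteMeasure μ] {ι : Type*} (s : Finset ι)
    {Z : ι → Ω → V}
    (hZ : ∀ i ∈ s, MemLp (Z i) 2 μ) (hmean : ∀ i ∈ s, ∫ ω, Z i ω ∂μ = 0)
    (hindep : (s : Set ι).Pairwise fun i j => Z i ⟂ᵢ[μ] Z j) :
    ∫ ω, ‖∑ i ∈ s, Z i ω‖ ^ 2 ∂μ = ∑ i ∈ s, ∫ ω, ‖Z i ω‖ ^ 2 ∂μ := by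
  have hint : ∀ i ∈ s, ∀ j ∈ s, Integrable (fun ω => ⟪Z i ω, Z j ω⟫) μ :=
    fun i hi j hj => (hZ i hi).integrable_inner (hZ j hj)
  have horth : ∀ i ∈ s, ∀ j ∈ s, j ≠ i → ∫ ω, ⟪Z i ω, Z j ω⟫ ∂μ = 0 := fun i hi j hj hji =>
    calc ∫ ω, ⟪Z i ω, Z j ω⟫ ∂μ = ⟪∫ ω, Z i ω ∂μ, ∫ ω, Z j ω ∂μ⟫ :=
          (hindep hi hj hji.symm).integral_bilin ((hZ i hi).integrable one_le_two)
            ((hZ j hj).integrable one_le_two) (innerSL ℝ)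
      _ = 0 := by rw [hmean i hi, inner_zero_left]
  simp_rw [← real_inner_self_eq_norm_sq, sum_inner, inner_sum]
  rw [integral_finsetSum _ fun i hi => integrable_finsetSum _ (hint i hi)]
  refine sum_congr rfl fun i hi => ?_
  rw [integral_finsetSum _ (hint i hi), sum_eq_single_of_mem i hi (horth i hi)]

theorem l2Norm_integral_sub_sampleMean_le [IsProbabilityMeasure μ] {W : Ω → V}
    (hW : MemLp W 2 μ) {X : ℕ → Ω → V} (hid : ∀ i, IdentDistrib (X i) W μ μ)
    (hindep : Pairwise fun i j => X i ⟂ᵢ[μ] X j) {n : ℕ} (hn : n ≠ 0) :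
    l2Norm μ (fun ω => ∫ ω', W ω' ∂μ - (n : ℝ)⁻¹ • ∑ i ∈ range n, X i ω)
      ≤ l2Norm μ W / √n := by
  set m := ∫ ω, W ω ∂μ
  set Z : ℕ → Ω → V := fun i ω => m - X i ω
  have hX : ∀ i, MemLp (X i) 2 μ := fun i => (hid i).symm.memLp_snd hW
  have hZ : ∀ i, MemLp (Z i) 2 μ := fun i => (memLp_const m).sub (hX i)
  have hmean : ∀ i, ∫ ω, Z i ω ∂μ = 0 := fun i => by
    simp [Z, integral_sub (integrable_const m) ((hX i).integrable one_le_two),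
      (hid i).integral_eq, m]
  have hZindep : Pairwise fun i j => Z i ⟂ᵢ[μ] Z j := fun i j hij =>
    (hindep hij).comp (by fun_prop : Continuous (m - ·)).measurable
      (by fun_prop : Continuous (m - ·)).measurable
  have hvar : ∀ i, ∫ ω, ‖Z i ω‖ ^ 2 ∂μ ≤ ∫ ω, ‖W ω‖ ^ 2 ∂μ := fun i =>
    calc ∫ ω, ‖Z i ω‖ ^ 2 ∂μ = ∫ ω, ‖W ω - m‖ ^ 2 ∂μ := by
          simp only [Z, norm_sub_rev m]
          exact ((hid i).comp (u := fun x => ‖x - m‖ ^ 2)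
            (by fun_prop : Continuous _).measurable).integral_eq
      _ = ∫ ω, ‖W ω‖ ^ 2 ∂μ - ‖m‖ ^ 2 := integral_norm_sub_integral_sq hW
      _ ≤ ∫ ω, ‖W ω‖ ^ 2 ∂μ := sub_le_self _ (sq_nonneg _)
  have hmean_form : (fun ω => m - (n : ℝ)⁻¹ • ∑ i ∈ range n, X i ω)
      = (n : ℝ)⁻¹ • ∑ i ∈ range n, Z i := by
    funext ω
    simp only [Z, Pi.smul_apply, Finset.sum_apply, sum_sub_distrib, sum_const, card_range,
      smul_sub, ← Nat.cast_smul_eq_nsmul ℝ, smul_smul,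
      inv_mul_cancel₀ ((Nat.cast_ne_zero (R := ℝ)).mpr hn), one_smul]
  calc l2Norm μ (fun ω => m - (n : ℝ)⁻¹ • ∑ i ∈ range n, X i ω)
      = (n : ℝ)⁻¹ * √(∑ i ∈ range n, ∫ ω, ‖Z i ω‖ ^ 2 ∂μ) := by
        rw [hmean_form, l2Norm_smul, abs_of_nonneg (by positivity), l2Norm]
        simp only [Finset.sum_apply]
        rw [integral_norm_sum_sq_of_pairwise_indepFun _ (fun i _ => hZ i) (fun i _ => hmean i)
          (hZindep.set_pairwise _)]
    _ ≤ (n : ℝ)⁻¹ * √(n * ∫ ω, ‖W ω‖ ^ 2 ∂μ) := by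
        gcongr
        simpa using sum_le_sum fun i (_ : i ∈ range n) => hvar i
    _ = l2Norm μ W / √n := by
        have hn' : (0 : ℝ) < n := by positivity
        rw [Real.sqrt_mul hn'.le, l2Norm]
        field_simp
        rw [Real.sq_sqrt hn'.le]

theorem l2Norm_sub_multilevel_le [IsProbabilityMeasure μ] (c : V) (L : ℕ) {w : ℕ → Ω → V}
    (hw : ∀ ℓ, MemLp (w ℓ) 2 μ) {M : ℕ → ℕ} (hM : ∀ ℓ ≤ L, M ℓ ≠ 0) {Y : ℕ → ℕ → Ω → V}
    (hid : ∀ ℓ i, IdentDistrib (Y ℓ i) (w ℓ) μ μ)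
    (hindep : ∀ ℓ, Pairwise fun i j => Y ℓ i ⟂ᵢ[μ] Y ℓ j) :
    l2Norm μ (fun ω => c - ∑ ℓ ∈ range (L + 1), (M ℓ : ℝ)⁻¹ • ∑ i ∈ range (M ℓ), Y ℓ i ω)
      ≤ ‖c - ∑ ℓ ∈ range (L + 1), ∫ ω, w ℓ ω ∂μ‖
        + ∑ ℓ ∈ range (L + 1), l2Norm μ (w ℓ) / √(M ℓ) := by
  have hY : ∀ ℓ i, MemLp (Y ℓ i) 2 μ := fun ℓ i => (hid ℓ i).symm.memLp_snd (hw ℓ)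
  refine (l2Norm_const_sub_sum_le _ c (fun ℓ => ∫ ω, w ℓ ω ∂μ)
    (A := fun ℓ ω => (M ℓ : ℝ)⁻¹ • ∑ i ∈ range (M ℓ), Y ℓ i ω) fun ℓ _ =>
      (memLp_finsetSum _ fun i _ => hY ℓ i).const_smul _).trans ?_
  gcongr with ℓ hℓ
  exact l2Norm_integral_sub_sampleMean_le (hw ℓ) (hid ℓ) (hindep ℓ)
    (hM ℓ (Nat.lt_succ_iff.mp (mem_range.mp hℓ)))

end MonteCarlo

theorem stmt12_general {Ω V : Type*} [MeasurableSpace Ω] (μ : Measure Ω) [IsProbabilityMeasure μ]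
    [NormedAddCommGroup V] [InnerProductSpace ℝ V] [CompleteSpace V]
    [MeasurableSpace V] [BorelSpace V]
    (u : Ω → V) (v : ℕ → Ω → V) (L : ℕ) (e : ℕ → ℝ) (em1 : ℝ)
    (M : ℕ → ℕ) (hM : ∀ ℓ ≤ L, 1 ≤ M ℓ)
    (Y : ℕ → ℕ → Ω → V)
    (hu2 : MemLp u 2 μ) (hv2 : ∀ ℓ, MemLp (v ℓ) 2 μ)
    (hindep : iIndepFun (fun p : ℕ × ℕ => Y p.1 p.2) μ)
    (hid : ∀ ℓ i, IdentDistrib (Y ℓ i)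
      (fun ω => v ℓ ω - (if ℓ = 0 then 0 else v (ℓ - 1) ω)) μ μ)
    (he : ∀ ℓ ≤ L, Real.sqrt (∫ ω, ‖u ω - v ℓ ω‖ ^ 2 ∂μ) ≤ e ℓ)
    (hbase : Real.sqrt (∫ ω, ‖u ω‖ ^ 2 ∂μ) ≤ em1) :
    Real.sqrt (∫ ω, ‖(∫ ω', u ω' ∂μ) -
        ∑ ℓ ∈ Finset.range (L + 1), (M ℓ : ℝ)⁻¹ • ∑ i ∈ Finset.range (M ℓ), Y ℓ i ω‖ ^ 2 ∂μ)
      ≤ e L + ∑ ℓ ∈ Finset.range (L + 1),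
          (e ℓ + (if ℓ = 0 then em1 else e (ℓ - 1))) / Real.sqrt (M ℓ) := by
  set vPrev : ℕ → Ω → V := fun ℓ ω => if ℓ = 0 then 0 else v (ℓ - 1) ω
  set w : ℕ → Ω → V := fun ℓ => v ℓ - vPrev ℓ
  have hvPrev : ∀ ℓ, MemLp (vPrev ℓ) 2 μ := fun ℓ => by
    by_cases h : ℓ = 0 <;> simp [vPrev, h, hv2]
  have hw : ∀ ℓ, MemLp (w ℓ) 2 μ := fun ℓ => (hv2 ℓ).sub (hvPrev ℓ)
  have hbias : ‖∫ ω, u ω ∂μ - ∑ ℓ ∈ range (L + 1), ∫ ω, w ℓ ω ∂μ‖ ≤ e L := by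
    rw [← integral_finsetSum _ fun ℓ _ => (hw ℓ).integrable one_le_two,
      show (fun ω => ∑ ℓ ∈ range (L + 1), w ℓ ω) = v L from
        funext fun ω => sum_range_sub_prev (v · ω) L,
      ← integral_sub (hu2.integrable one_le_two) ((hv2 L).integrable one_le_two)]
    exact (norm_integral_le_l2Norm (hu2.sub (hv2 L))).trans (he L le_rfl)
  have hlevel : ∀ ℓ ≤ L, l2Norm μ (w ℓ) ≤ e ℓ + if ℓ = 0 then em1 else e (ℓ - 1) := by
    intro ℓ hℓ
    have hprev : l2Norm μ (u - vPrev ℓ) ≤ if ℓ = 0 then em1 else e (ℓ - 1) := by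
      by_cases h : ℓ = 0
      · simpa [vPrev, h, l2Norm] using hbase
      · simpa [vPrev, h, l2Norm] using he (ℓ - 1) (by omega)
    rw [show w ℓ = (u - vPrev ℓ) - (u - v ℓ) from (sub_sub_sub_cancel_left _ _ _).symm,
      add_comm]
    exact (l2Norm_sub_le (hu2.sub (hvPrev ℓ)) (hu2.sub (hv2 ℓ))).trans (add_le_add hprev (he ℓ hℓ))
  have hY_indep : ∀ ℓ, Pairwise fun i j => Y ℓ i ⟂ᵢ[μ] Y ℓ j := fun ℓ i j hij =>
    hindep.indepFun (i := (ℓ, i)) (j := (ℓ, j)) (by simpa using hij)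
  refine (l2Norm_sub_multilevel_le _ L hw (fun ℓ hℓ => Nat.one_le_iff_ne_zero.mp (hM ℓ hℓ)) hid
    hY_indep).trans ?_
  gcongr with ℓ hℓ
  exact hlevel ℓ (Nat.lt_succ_iff.mp (mem_range.mp hℓ))

/-- Core multilevel Monte Carlo error estimate (Theorem 5.3): `Y ℓ i` is the `i`-th
independent sample of the level-`ℓ` correction `v ℓ - v (ℓ-1)` (with `v_{-1} = 0`),
`e ℓ` bounds the `L²(Ω;V)`-error of level `ℓ`, and `em1` bounds `‖u‖_{L²(Ω;V)}`. -/
theorem stmt12 {Ω V : Type*} [MeasurableSpace Ω] (μ : Measure Ω) [IsProbabilityMeasure μ]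
    [NormedAddCommGroup V] [InnerProductSpace ℝ V] [CompleteSpace V]
    [MeasurableSpace V] [BorelSpace V] [SecondCountableTopology V]
    (u : Ω → V) (v : ℕ → Ω → V) (L : ℕ) (e : ℕ → ℝ) (em1 : ℝ)
    (M : ℕ → ℕ) (hM : ∀ ℓ ≤ L, 1 ≤ M ℓ)
    (Y : ℕ → ℕ → Ω → V)
    (hu2 : MemLp u 2 μ) (hv2 : ∀ ℓ, MemLp (v ℓ) 2 μ)
    (hYmeas : ∀ ℓ i, Measurable (Y ℓ i))
    (hindep : iIndepFun (fun p : ℕ × ℕ => Y p.1 p.2) μ)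
    (hid : ∀ ℓ i, IdentDistrib (Y ℓ i)
      (fun ω => v ℓ ω - (if ℓ = 0 then 0 else v (ℓ - 1) ω)) μ μ)
    (he : ∀ ℓ ≤ L, Real.sqrt (∫ ω, ‖u ω - v ℓ ω‖ ^ 2 ∂μ) ≤ e ℓ)
    (hbase : Real.sqrt (∫ ω, ‖u ω‖ ^ 2 ∂μ) ≤ em1) :
    Real.sqrt (∫ ω, ‖(∫ ω', u ω' ∂μ) -
        ∑ ℓ ∈ Finset.range (L + 1), (M ℓ : ℝ)⁻¹ • ∑ i ∈ Finset.range (M ℓ), Y ℓ i ω‖ ^ 2 ∂μ)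
      ≤ e L + ∑ ℓ ∈ Finset.range (L + 1),
          (e ℓ + (if ℓ = 0 then em1 else e (ℓ - 1))) / Real.sqrt (M ℓ) :=
  stmt12_general μ u v L e em1 M hM Y hu2 hv2 hindep hid he hbase
end

section
/- Let (η_i)_{i∈ℕ} be nonnegative with Σ η_i < ∞, (e_i) functions with ‖e_i‖_{L^∞(D)} ≤ 1 and ‖∇e_i‖_{L^∞(D)} ≤ C_e i^α, and Σ_i η_i i^β ≤ C_η for some α, β, C_e, C_η > 0. Then for every b with 0 < b ≤ min(1, β/(2α)) and all x, y ∈ D, Σ_{i∈ℕ} η_i (e_i(x) − e_i(y))² ≤ 2^{2(1−b)} C_e^{2b} C_η ‖x − y‖₂^{2b}. -/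
/-- Variance-increment Hölder estimate feeding Kolmogorov–Chentsov (Lemma 3.4):
`Σ η_i (e_i(x) − e_i(y))² ≤ 2^{2(1−b)} C_e^{2b} C_η ‖x−y‖^{2b}`. -/
theorem stmt16 {d : ℕ} (η : ℕ → ℝ) (e : ℕ → EuclideanSpace ℝ (Fin d) → ℝ)
    (α β Ce Cη : ℝ) (hα : 0 < α) (hβ : 0 < β) (hCe : 0 < Ce) (hCη : 0 < Cη)
    (hη : ∀ i, 0 ≤ η i) (hsum : Summable η)
    (hbd : ∀ i x, |e i x| ≤ 1)
    (hdiff : ∀ i, Differentiable ℝ (e i))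
    (hgrad : ∀ i x, ‖fderiv ℝ (e i) x‖ ≤ Ce * (i : ℝ) ^ α)
    (hsum2 : Summable fun i => η i * (i : ℝ) ^ β)
    (hCsum : ∑' i, η i * (i : ℝ) ^ β ≤ Cη)
    (b : ℝ) (hb0 : 0 < b) (hb1 : b ≤ min 1 (β / (2 * α)))
    (x y : EuclideanSpace ℝ (Fin d)) :
    ∑' i, η i * (e i x - e i y) ^ 2
      ≤ 2 ^ (2 * (1 - b)) * Ce ^ (2 * b) * Cη * ‖x - y‖ ^ (2 * b) := by
  have hb1' : b ≤ 1 := le_trans hb1 (min_le_left _ _)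
  have hb2 : α * (2 * b) ≤ β := by
    have := le_trans hb1 (min_le_right _ _)
    rw [le_div_iff₀ (by positivity)] at this
    nlinarith
  have hnn : (0:ℝ) ≤ ‖x - y‖ := norm_nonneg _
  set K : ℝ := 2 ^ (2*(1-b)) * Ce ^ (2*b) * ‖x - y‖ ^ (2*b) with hK
  have hKnn : 0 ≤ K := by positivity
  -- Lipschitz bound
  have hlip : ∀ i, |e i x - e i y| ≤ Ce * (i:ℝ) ^ α * ‖x - y‖ := by
    intro i
    have := (convex_univ : Convex ℝ (Set.univ : Set (EuclideanSpace ℝ (Fin d)))).norm_image_sub_le_of_norm_fderiv_le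
      (fun z _ => (hdiff i z)) (fun z _ => hgrad i z) (Set.mem_univ y) (Set.mem_univ x)
    simpa [Real.norm_eq_abs] using this
  have key : ∀ i, η i * (e i x - e i y) ^ 2 ≤ K * (η i * (i:ℝ) ^ β) := by
    intro i
    rcases Nat.eq_zero_or_pos i with hi | hi
    · subst hi
      have h0 : ((0:ℕ):ℝ) ^ α = 0 := by
        simp [Real.zero_rpow hα.ne']
      have := hlip 0
      rw [h0] at this
      simp only [mul_zero, zero_mul] at this
      have hA : e 0 x - e 0 y = 0 := by
        have := abs_nonneg (e 0 x - e 0 y)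
        have h := le_antisymm ‹|e 0 x - e 0 y| ≤ 0› this
        exact abs_eq_zero.mp h
      rw [hA]
      have : ((0:ℕ):ℝ) ^ β = 0 := by simp [Real.zero_rpow hβ.ne']
      rw [this]
      simp
    · set A := |e i x - e i y| with hAdef
      have hAnn : 0 ≤ A := abs_nonneg _
      have hA2 : A ≤ 2 := by
        have h1 := hbd i x
        have h2 := hbd i y
        calc A ≤ |e i x| + |e i y| := abs_sub _ _
          _ ≤ 2 := by linarith
      have hsq : (e i x - e i y) ^ 2 = A ^ ((2:ℝ)) := by
        rw [← sq_abs, ← Real.rpow_natCast A 2]; norm_num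
      have hsplit : A ^ ((2:ℝ)) ≤ 2 ^ (2*(1-b)) * (Ce * (i:ℝ)^α * ‖x - y‖) ^ (2*b) := by
        rcases eq_or_lt_of_le hAnn with h0 | h0
        · rw [← h0, Real.zero_rpow (by norm_num)]
          positivity
        · have hAeq : A^((2:ℝ)) = A^(2*(1-b)) * A^(2*b) := by
            rw [← Real.rpow_add h0]; ring_nf
          rw [hAeq]
          have h1 : A^(2*(1-b)) ≤ (2:ℝ)^(2*(1-b)) :=
            Real.rpow_le_rpow hAnn hA2 (by linarith)
          have h2 : A^(2*b) ≤ (Ce * (i:ℝ)^α * ‖x - y‖)^(2*b) :=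
            Real.rpow_le_rpow hAnn (hlip i) (by linarith)
          exact mul_le_mul h1 h2 (by positivity) (by positivity)
      have hCeα : (0:ℝ) ≤ Ce * (i:ℝ)^α := by positivity
      have hmul : (Ce * (i:ℝ)^α * ‖x - y‖) ^ (2*b)
          = Ce ^ (2*b) * ((i:ℝ)^α) ^ (2*b) * ‖x - y‖ ^ (2*b) := by
        rw [Real.mul_rpow hCeα hnn, Real.mul_rpow hCe.le (by positivity)]
      have hiα : ((i:ℝ)^α) ^ (2*b) ≤ (i:ℝ) ^ β := by
        rw [← Real.rpow_mul (Nat.cast_nonneg i)]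
        exact Real.rpow_le_rpow_of_exponent_le (by exact_mod_cast hi) hb2
      calc η i * (e i x - e i y) ^ 2
          = η i * A ^ ((2:ℝ)) := by rw [hsq]
        _ ≤ η i * (2 ^ (2*(1-b)) * (Ce ^ (2*b) * ((i:ℝ)^α) ^ (2*b) * ‖x - y‖ ^ (2*b)))
            := by rw [← hmul]; exact mul_le_mul_of_nonneg_left hsplit (hη i)
        _ ≤ η i * (2 ^ (2*(1-b)) * (Ce ^ (2*b) * (i:ℝ)^β * ‖x - y‖ ^ (2*b)))
            := by
              apply mul_le_mul_of_nonneg_left _ (hη i)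
              apply mul_le_mul_of_nonneg_left _ (by positivity)
              apply mul_le_mul_of_nonneg_right _ (by positivity)
              exact mul_le_mul_of_nonneg_left hiα (by positivity)
        _ = K * (η i * (i:ℝ) ^ β) := by rw [hK]; ring
  have hsumK : Summable fun i => K * (η i * (i:ℝ)^β) := hsum2.mul_left K
  have hsumL : Summable fun i => η i * (e i x - e i y) ^ 2 :=
    Summable.of_nonneg_of_le (fun i => mul_nonneg (hη i) (sq_nonneg _)) key hsumK
  calc ∑' i, η i * (e i x - e i y) ^ 2
      ≤ ∑' i, K * (η i * (i:ℝ)^β) := Summable.tsum_le_tsum key hsumL hsumK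
    _ = K * ∑' i, η i * (i:ℝ)^β := tsum_mul_left
    _ ≤ K * Cη := mul_le_mul_of_nonneg_left hCsum hKnn
    _ = 2 ^ (2 * (1 - b)) * Ce ^ (2 * b) * Cη * ‖x - y‖ ^ (2 * b) := by rw [hK]; ring
end
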